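/- If Pr(S) = C_n·exp(n f(m_s)) is a probability distribution on {0,1}ⁿ depending only on the magnetization m_s = (1/n)∑ Sᵢ, with f continuous on [0,1], then lim_{n→∞} −(1/n) log C_n = max_{m∈[0,1]} [H₂(m) + f(m)]. -/

import Mathlib

open Real Filter

/-- Binary entropy in nats. -/
noncomputable def binEnt (m : ℝ) : ℝ := -(m * Real.log m) - (1 - m) * Real.log (1 - m)

/-!
Grouping the configurations by their number `k` of ones gives
`1 / C_n = ∑ₖ (n choose k) exp (n f (k / n))`. The entropy bounds
`(n choose k) ≤ exp (n H₂ (k / n)) ≤ (n + 1) (n choose k)` come from comparing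
`(n choose k) kᵏ (n - k)ⁿ⁻ᵏ` with the largest term of the binomial expansion of
`nⁿ = (k + (n - k))ⁿ`. So each of the `n + 1` summands is `exp (n g (k / n))` up to a factor
`n + 1`, where `g = H₂ + f`. The sum is therefore squeezed between
`exp (n g (⌊x n⌋ / n)) / (n + 1)`, for a maximiser `x` of `g` on `[0, 1]`, and
`(n + 1) exp (n max g)`, and `log (n + 1) / n → 0`.
-/

open Finset Topology

def binomTerm (n k j : ℕ) : ℕ := n.choose j * (k ^ j * (n - k) ^ (n - j))

theorem sum_range_binomTerm {n k : ℕ} (hk : k ≤ n) :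
    ∑ j ∈ range (n + 1), binomTerm n k j = n ^ n := by
  have h := add_pow k (n - k) n
  rw [Nat.add_sub_cancel' hk] at h
  rw [h]
  exact sum_congr rfl fun j _ => by rw [binomTerm, Nat.cast_id]; ring

theorem binomTerm_succ_mul {n k j : ℕ} (hj : j < n) :
    binomTerm n k (j + 1) * ((j + 1) * (n - k)) = binomTerm n k j * ((n - j) * k) := by
  have hpow : (n - k) ^ (n - (j + 1)) * (n - k) = (n - k) ^ (n - j) := by
    rw [← pow_succ]; congr 1; omega
  calc binomTerm n k (j + 1) * ((j + 1) * (n - k))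
      = n.choose (j + 1) * (j + 1) * (k ^ j * k * ((n - k) ^ (n - (j + 1)) * (n - k))) := by
        rw [binomTerm]; ring
    _ = n.choose j * (n - j) * (k ^ j * k * (n - k) ^ (n - j)) := by
        rw [Nat.choose_succ_right_eq, hpow]
    _ = binomTerm n k j * ((n - j) * k) := by rw [binomTerm]; ring

-- Consecutive terms have ratio `(n - j) k / ((j + 1) (n - k))`, which is `≥ 1` iff `j < k`.
theorem binomTerm_le_binomTerm_self {n k j : ℕ} (hk : k ≤ n) (hj : j ≤ n) :
    binomTerm n k j ≤ binomTerm n k k := by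
  obtain rfl | hkn := hk.eq_or_lt
  · obtain rfl | hjk := hj.eq_or_lt
    · exact le_rfl
    · simp [binomTerm, zero_pow (Nat.sub_ne_zero_of_lt hjk)]
  have hpos (i : ℕ) : 0 < (i + 1) * (n - k) := Nat.mul_pos i.succ_pos (Nat.sub_pos_of_lt hkn)
  have up : MonotoneOn (binomTerm n k) (Set.Iic k) := by
    refine monotoneOn_of_le_succ Set.ordConnected_Iic fun i _ _ hi => ?_
    rw [Order.succ_eq_add_one] at hi ⊢
    rw [Set.mem_Iic] at hi
    refine Nat.le_of_mul_le_mul_right ?_ (hpos i)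
    rw [binomTerm_succ_mul (by omega)]
    exact Nat.mul_le_mul_left _ <| (Nat.mul_le_mul (by omega) (by omega)).trans_eq (mul_comm _ _)
  have down : AntitoneOn (binomTerm n k) (Set.Icc k n) := by
    refine antitoneOn_of_succ_le Set.ordConnected_Icc fun i _ hi hi' => ?_
    rw [Order.succ_eq_add_one] at hi' ⊢
    rw [Set.mem_Icc] at hi'
    refine Nat.le_of_mul_le_mul_right ?_ (hpos i)
    rw [binomTerm_succ_mul (by omega)]
    exact Nat.mul_le_mul_left _ <| (Nat.mul_le_mul (Nat.sub_le_sub_left hi.1 n)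
      (Nat.le_succ_of_le hi.1)).trans_eq (mul_comm _ _)
  rcases le_total j k with hjk | hkj
  · exact up hjk Set.self_mem_Iic hjk
  · exact down ⟨le_rfl, hk⟩ ⟨hkj, hj⟩ hkj

theorem choose_mul_pow_mul_pow_le_pow {n k : ℕ} (hk : k ≤ n) :
    n.choose k * (k ^ k * (n - k) ^ (n - k)) ≤ n ^ n := by
  rw [← sum_range_binomTerm hk]
  exact single_le_sum (f := binomTerm n k) (fun _ _ => Nat.zero_le _) (mem_range.mpr (by omega))

theorem pow_le_succ_mul_choose_mul_pow_mul_pow {n k : ℕ} (hk : k ≤ n) :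
    n ^ n ≤ (n + 1) * (n.choose k * (k ^ k * (n - k) ^ (n - k))) := by
  rw [← sum_range_binomTerm hk]
  have := sum_le_card_nsmul (range (n + 1)) (binomTerm n k) _
    fun j hj => binomTerm_le_binomTerm_self hk (Nat.lt_succ_iff.mp (mem_range.mp hj))
  rwa [card_range, smul_eq_mul] at this

theorem sum_pi_bool_apply_card {ι M : Type*} [Fintype ι] [DecidableEq ι] [AddCommMonoid M]
    (F : ℕ → M) :
    ∑ s : ι → Bool, F (univ.filter fun i => s i).card =
      ∑ k ∈ range (Fintype.card ι + 1), (Fintype.card ι).choose k • F k := by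
  let e : (ι → Bool) ≃ Finset ι :=
    { toFun := fun s => univ.filter fun i => s i
      invFun := fun t i => decide (i ∈ t)
      left_inv := fun s => by ext; simp
      right_inv := fun t => by ext; simp }
  rw [Fintype.sum_equiv e (fun s => F (univ.filter fun i => s i).card) (fun t => F t.card)
    fun _ => rfl, ← powerset_univ, sum_powerset_apply_card, card_univ]

theorem binEnt_eq_binEntropy : binEnt = binEntropy := by
  ext p
  rw [binEnt, binEntropy, log_inv, log_inv]
  ring

theorem mul_log_div (x : ℝ) {y : ℝ} (hy : y ≠ 0) :
    x * log (x / y) = x * log x - x * log y := by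
  rcases eq_or_ne x 0 with rfl | hx
  · simp
  · rw [log_div hx hy, mul_sub]

theorem exp_natCast_mul_log (k : ℕ) : exp (k * log k) = (k : ℝ) ^ k := by
  rcases k.eq_zero_or_pos with rfl | hk
  · simp
  · rw [← log_pow, exp_log (by positivity)]

theorem natCast_mul_binEnt_div {n k : ℕ} (hk : k ≤ n) :
    (n : ℝ) * binEnt (k / n) = n * log n - k * log k - (n - k : ℕ) * log (n - k : ℕ) := by
  rcases n.eq_zero_or_pos with rfl | hn
  · obtain rfl : k = 0 := Nat.le_zero.mp hk
    simp
  have hn' : (n : ℝ) ≠ 0 := by positivity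
  have hsub : ((n - k : ℕ) : ℝ) = n - k := Nat.cast_sub hk
  have hcompl : 1 - (k : ℝ) / n = (n - k : ℕ) / n := by rw [hsub]; field_simp
  calc (n : ℝ) * binEnt (k / n)
      = -(k * log (k / n)) - (n - k : ℕ) * log ((n - k : ℕ) / n) := by
        rw [binEnt, hcompl]; field_simp
    _ = _ := by rw [mul_log_div _ hn', mul_log_div _ hn', hsub]; ring

theorem exp_natCast_mul_binEnt_div {n k : ℕ} (hk : k ≤ n) :
    exp (n * binEnt (k / n)) =
      (n : ℝ) ^ n / ((k : ℝ) ^ k * ((n - k : ℕ) : ℝ) ^ (n - k)) := by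
  rw [natCast_mul_binEnt_div hk, exp_sub, exp_sub, exp_natCast_mul_log, exp_natCast_mul_log,
    exp_natCast_mul_log, div_div]

theorem pow_self_mul_pow_self_pos {n k : ℕ} :
    0 < (k : ℝ) ^ k * ((n - k : ℕ) : ℝ) ^ (n - k) := by
  exact_mod_cast Nat.mul_pos Nat.pow_self_pos Nat.pow_self_pos

theorem choose_le_exp_mul_binEnt {n k : ℕ} (hk : k ≤ n) :
    (n.choose k : ℝ) ≤ exp (n * binEnt (k / n)) := by
  rw [exp_natCast_mul_binEnt_div hk, le_div_iff₀ pow_self_mul_pow_self_pos]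
  exact_mod_cast choose_mul_pow_mul_pow_le_pow hk

theorem exp_mul_binEnt_le_succ_mul_choose {n k : ℕ} (hk : k ≤ n) :
    exp (n * binEnt (k / n)) ≤ (n + 1) * n.choose k := by
  rw [exp_natCast_mul_binEnt_div hk, div_le_iff₀ pow_self_mul_pow_self_pos, mul_assoc]
  exact_mod_cast pow_le_succ_mul_choose_mul_pow_mul_pow hk

theorem tendsto_log_natCast_succ_div :
    Tendsto (fun n : ℕ => log (n + 1) / n) atTop (𝓝 0) := by
  have h := (tendsto_pow_log_div_mul_add_atTop 1 (-1) 1 one_ne_zero).comp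
    (tendsto_atTop_add_const_right atTop 1 tendsto_natCast_atTop_atTop)
  refine h.congr fun n => ?_
  simp

theorem natCast_div_mem_Icc {k n : ℕ} (hk : k ≤ n) : (k : ℝ) / n ∈ Set.Icc 0 1 :=
  ⟨by positivity, div_le_one_of_le₀ (by exact_mod_cast hk) n.cast_nonneg⟩

section LaplacePrinciple

variable {g : ℝ → ℝ} {w : ℕ → ℕ → ℝ}

theorem log_sum_le_log_succ_add {n : ℕ} {M : ℝ} (hpos : ∀ k ≤ n, 0 < w n k)
    (hle : ∀ k ≤ n, w n k ≤ exp (n * M)) :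
    log (∑ k ∈ range (n + 1), w n k) ≤ log (n + 1) + n * M := by
  have hsum : ∑ k ∈ range (n + 1), w n k ≤ (n + 1) * exp (n * M) := by
    simpa using sum_le_card_nsmul (range (n + 1)) (w n) _
      fun k hk => hle k (Nat.lt_succ_iff.mp (mem_range.mp hk))
  have hZ : 0 < ∑ k ∈ range (n + 1), w n k :=
    sum_pos (fun k hk => hpos k (Nat.lt_succ_iff.mp (mem_range.mp hk))) nonempty_range_add_one
  calc log (∑ k ∈ range (n + 1), w n k) ≤ log ((n + 1) * exp (n * M)) := log_le_log hZ hsum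
    _ = log (n + 1) + n * M := by rw [log_mul (by positivity) (exp_pos _).ne', log_exp]

theorem le_log_succ_add_log_sum {n k : ℕ} (hk : k ≤ n) (hpos : ∀ j ≤ n, 0 < w n j)
    (hge : exp (n * g (k / n)) ≤ (n + 1) * w n k) :
    n * g (k / n) ≤ log (n + 1) + log (∑ j ∈ range (n + 1), w n j) := by
  have hterm : w n k ≤ ∑ j ∈ range (n + 1), w n j :=
    single_le_sum (fun j hj => (hpos j (Nat.lt_succ_iff.mp (mem_range.mp hj))).le)
      (mem_range.mpr (Nat.lt_succ_of_le hk))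
  calc (n : ℝ) * g (k / n) = log (exp (n * g (k / n))) := (log_exp _).symm
    _ ≤ log ((n + 1) * w n k) := log_le_log (exp_pos _) hge
    _ = log (n + 1) + log (w n k) := log_mul (by positivity) (hpos k hk).ne'
    _ ≤ log (n + 1) + log (∑ j ∈ range (n + 1), w n j) := by
        gcongr
        exact hpos k hk

theorem tendsto_log_sum_div_sSup (hg : ContinuousOn g (Set.Icc 0 1))
    (hle : ∀ n k : ℕ, k ≤ n → w n k ≤ exp (n * g (k / n)))
    (hge : ∀ n k : ℕ, k ≤ n → exp (n * g (k / n)) ≤ (n + 1) * w n k) :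
    Tendsto (fun n : ℕ => log (∑ k ∈ range (n + 1), w n k) / n) atTop
      (𝓝 (sSup (g '' Set.Icc 0 1))) := by
  obtain ⟨x, hx, hxM⟩ := isCompact_Icc.exists_sSup_image_eq (Set.nonempty_Icc.2 zero_le_one) hg
  set M := sSup (g '' Set.Icc 0 1)
  have hgM {n k : ℕ} (hk : k ≤ n) : g (k / n) ≤ M :=
    le_csSup (isCompact_Icc.image_of_continuousOn hg).bddAbove
      (Set.mem_image_of_mem g (natCast_div_mem_Icc hk))
  have hpos (n k : ℕ) (hk : k ≤ n) : 0 < w n k :=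
    pos_of_mul_pos_right ((exp_pos _).trans_le (hge n k hk)) (by positivity)
  have hfloor (n : ℕ) : ⌊x * n⌋₊ ≤ n :=
    Nat.floor_le_of_le (mul_le_of_le_one_left n.cast_nonneg hx.2)
  have hlow : Tendsto (fun n : ℕ => g (⌊x * n⌋₊ / n) - log (n + 1) / n) atTop (𝓝 M) := by
    have hlim : Tendsto (fun n : ℕ => (⌊x * n⌋₊ : ℝ) / n) atTop (𝓝[Set.Icc 0 1] x) :=
      tendsto_nhdsWithin_iff.2 ⟨(tendsto_nat_floor_mul_div_atTop hx.1).comp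
        tendsto_natCast_atTop_atTop, Eventually.of_forall fun n => natCast_div_mem_Icc (hfloor n)⟩
    simpa [hxM] using ((hg x hx).tendsto.comp hlim).sub tendsto_log_natCast_succ_div
  have hup : Tendsto (fun n : ℕ => M + log (n + 1) / n) atTop (𝓝 M) := by
    simpa using tendsto_log_natCast_succ_div.const_add M
  refine tendsto_of_tendsto_of_tendsto_of_le_of_le' hlow hup ?_ ?_
  · filter_upwards [eventually_gt_atTop 0] with n hn
    have hn' : (0 : ℝ) < n := Nat.cast_pos.2 hn
    rw [le_div_iff₀ hn', sub_mul, div_mul_cancel₀ _ hn'.ne', mul_comm]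
    linarith [le_log_succ_add_log_sum (hfloor n) (hpos n) (hge n _ (hfloor n))]
  · filter_upwards [eventually_gt_atTop 0] with n hn
    have hn' : (0 : ℝ) < n := Nat.cast_pos.2 hn
    rw [div_le_iff₀ hn', add_mul, div_mul_cancel₀ _ hn'.ne', mul_comm]
    linarith [log_sum_le_log_succ_add (hpos n)
      fun k hk => (hle n k hk).trans (exp_le_exp.2 (by gcongr; exact hgM hk))]

end LaplacePrinciple

/-- If Pr(S) = C_n exp(n f(m_s)) on {0,1}ⁿ, with C_n the normalization constant
and f continuous on [0,1], then −(1/n) log C_n → max_{m∈[0,1]}[H₂(m)+f(m)]. -/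
theorem stmt3 (f : ℝ → ℝ) (hf : ContinuousOn f (Set.Icc 0 1))
    (C : ℕ → ℝ)
    (hC : ∀ n : ℕ, C n =
      (∑ s : Fin n → Bool,
        Real.exp (n * f ((∑ i, if s i then (1:ℝ) else 0) / (n : ℝ))))⁻¹) :
    Tendsto (fun n : ℕ => -(1 / (n : ℝ)) * Real.log (C n)) atTop
      (nhds (sSup ((fun m => binEnt m + f m) '' Set.Icc 0 1))) := by
  have hC' (n : ℕ) : -(1 / (n : ℝ)) * log (C n) =
      log (∑ k ∈ range (n + 1), (n.choose k : ℝ) * exp (n * f (k / n))) / n := by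
    simp_rw [hC, sum_boole, log_inv]
    rw [sum_pi_bool_apply_card (fun k => exp (n * f (k / n))), Fintype.card_fin]
    simp only [nsmul_eq_mul]
    ring
  have hg : ContinuousOn (fun m => binEnt m + f m) (Set.Icc 0 1) :=
    (binEnt_eq_binEntropy ▸ binEntropy_continuous).continuousOn.add hf
  simp_rw [hC']
  refine tendsto_log_sum_div_sSup hg (fun n k hk => ?_) (fun n k hk => ?_) <;>
    rw [mul_add, exp_add]
  · gcongr
    exact choose_le_exp_mul_binEnt hk
  · rw [← mul_assoc]
    gcongr
    exact exp_mul_binEnt_le_succ_mul_choose hk
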